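/- (Example 5.2, the knife edge on an inclined plane: the one-form produced by the Chaplygin Hamilton–Jacobi method solves the nonholonomic Hamilton–Jacobi equation.) Let m, J, g₀ > 0, α ∈ (0, π/2), and E, γ_φ⁰ ∈ ℝ. Let U := {(φ,x,y) ∈ ℝ³ : 0 < φ < π/2 and m·(2E − (γ_φ⁰)²/J) + 2m²g₀ sin α·x > 0}. Define the one-form γ on U by γ(φ,x,y) = γ_φ⁰ dφ + √(m·(2E − (γ_φ⁰)²/J) + 2m²g₀ sin α·x)·(cos φ dx + sin φ dy). Then: (i) H(q, γ(q)) = E for all q ∈ U; and (ii) dγ_q(u, v) = 0 for all q ∈ U and all u, v ∈ D_q. -/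
import Mathlib


noncomputable section

open Matrix

/-- Hamiltonian of the knife edge on an inclined plane, coordinates
`q = (φ, x, y)` (indices 0,1,2) and momenta `p = (p_φ, p_x, p_y)`;
`g₀` is the gravitational acceleration. -/
def knifeH (m J g₀ α : ℝ) (q p : Fin 3 → ℝ) : ℝ :=
  ((p 1) ^ 2 + (p 2) ^ 2) / (2 * m) + (p 0) ^ 2 / (2 * J) - m * g₀ * Real.sin α * q 1

/-- Constraint distribution of the knife edge, spanned by `∂_φ` and
`cos φ ∂_x + sin φ ∂_y`. -/
def knifeD (q : Fin 3 → ℝ) : Submodule ℝ (Fin 3 → ℝ) :=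
  Submodule.span ℝ ({![1, 0, 0], ![0, Real.cos (q 0), Real.sin (q 0)]} : Set (Fin 3 → ℝ))

/-- The one-form produced by the Chaplygin Hamilton–Jacobi method:
`γ = γ_φ⁰ dφ + √(m(2E − (γ_φ⁰)²/J) + 2m²g₀ sin α · x)·(cos φ dx + sin φ dy)`. -/
def knifeGamma (m J g₀ α E γφ0 : ℝ) (q : Fin 3 → ℝ) : Fin 3 → ℝ :=
  ![γφ0,
    Real.sqrt (m * (2 * E - γφ0 ^ 2 / J) + 2 * m ^ 2 * g₀ * Real.sin α * q 1) * Real.cos (q 0),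
    Real.sqrt (m * (2 * E - γφ0 ^ 2 / J) + 2 * m ^ 2 * g₀ * Real.sin α * q 1) * Real.sin (q 0)]

/-- The domain `U`: `0 < φ < π/2` and the radicand is positive. -/
def knifeU (m J g₀ α E γφ0 : ℝ) : Set (Fin 3 → ℝ) :=
  {q | 0 < q 0 ∧ q 0 < Real.pi / 2
    ∧ 0 < m * (2 * E - γφ0 ^ 2 / J) + 2 * m ^ 2 * g₀ * Real.sin α * q 1}

/-- abstract form of gamma -/
def gammaAux (c k γφ0 : ℝ) (q : Fin 3 → ℝ) : Fin 3 → ℝ :=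
  ![γφ0, Real.sqrt (c + k * q 1) * Real.cos (q 0),
    Real.sqrt (c + k * q 1) * Real.sin (q 0)]

/-- its derivative at q -/
def gammaAuxD (c k : ℝ) (q : Fin 3 → ℝ) : (Fin 3 → ℝ) →L[ℝ] (Fin 3 → ℝ) :=
  ContinuousLinearMap.pi ![0,
    (k / (2 * Real.sqrt (c + k * q 1)) * Real.cos (q 0)) • ContinuousLinearMap.proj 1
      + (-(Real.sqrt (c + k * q 1) * Real.sin (q 0))) • ContinuousLinearMap.proj 0,
    (k / (2 * Real.sqrt (c + k * q 1)) * Real.sin (q 0)) • ContinuousLinearMap.proj 1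
      + (Real.sqrt (c + k * q 1) * Real.cos (q 0)) • ContinuousLinearMap.proj 0]

lemma gammaAux_hasFDerivAt (c k γφ0 : ℝ) (q : Fin 3 → ℝ) (hr : 0 < c + k * q 1) :
    HasFDerivAt (gammaAux c k γφ0) (gammaAuxD c k q) q := by
  have hproj0 : HasFDerivAt (fun x : Fin 3 → ℝ => x 0)
      (ContinuousLinearMap.proj (R := ℝ) (φ := fun _ : Fin 3 => ℝ) 0) q :=
    hasFDerivAt_apply 0 q
  have hproj1 : HasFDerivAt (fun x : Fin 3 → ℝ => x 1)
      (ContinuousLinearMap.proj (R := ℝ) (φ := fun _ : Fin 3 => ℝ) 1) q :=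
    hasFDerivAt_apply 1 q
  have hrad : HasFDerivAt (fun x : Fin 3 → ℝ => c + k * x 1)
      (k • ContinuousLinearMap.proj (R := ℝ) (φ := fun _ : Fin 3 => ℝ) 1) q :=
    ((hproj1.const_mul k).const_add c)
  have hsqrt := hrad.sqrt (ne_of_gt hr)
  have hcos := hproj0.cos
  have hsin := hproj0.sin
  rw [hasFDerivAt_pi']
  intro i
  fin_cases i
  · simpa [gammaAux, gammaAuxD, ContinuousLinearMap.proj_pi] using
      hasFDerivAt_const γφ0 q
  · have hD : (k / (2 * Real.sqrt (c + k * q 1)) * Real.cos (q 0))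
          • ContinuousLinearMap.proj (R := ℝ) (φ := fun _ : Fin 3 => ℝ) 1
        + (-(Real.sqrt (c + k * q 1) * Real.sin (q 0))) • ContinuousLinearMap.proj 0
        = Real.sqrt (c + k * q 1) • (-Real.sin (q 0))
            • ContinuousLinearMap.proj (R := ℝ) (φ := fun _ : Fin 3 => ℝ) 0
          + Real.cos (q 0) • (1 / (2 * Real.sqrt (c + k * q 1)))
            • k • ContinuousLinearMap.proj 1 := by
      ext w
      simp [ContinuousLinearMap.add_apply, ContinuousLinearMap.smul_apply,
        ContinuousLinearMap.proj_apply, smul_eq_mul]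
      ring
    simp only [gammaAux, gammaAuxD, ContinuousLinearMap.proj_pi, Fin.isValue,
      Matrix.cons_val_one, Matrix.head_cons]
    rw [hD]
    exact hsqrt.mul hcos
  · have hD : (k / (2 * Real.sqrt (c + k * q 1)) * Real.sin (q 0))
          • ContinuousLinearMap.proj (R := ℝ) (φ := fun _ : Fin 3 => ℝ) 1
        + (Real.sqrt (c + k * q 1) * Real.cos (q 0)) • ContinuousLinearMap.proj 0
        = Real.sqrt (c + k * q 1) • Real.cos (q 0)
            • ContinuousLinearMap.proj (R := ℝ) (φ := fun _ : Fin 3 => ℝ) 0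
          + Real.sin (q 0) • (1 / (2 * Real.sqrt (c + k * q 1)))
            • k • ContinuousLinearMap.proj 1 := by
      ext w
      simp [ContinuousLinearMap.add_apply, ContinuousLinearMap.smul_apply,
        ContinuousLinearMap.proj_apply, smul_eq_mul]
      ring
    simp only [gammaAux, gammaAuxD, ContinuousLinearMap.proj_pi, Fin.isValue,
      Matrix.cons_val_two, Matrix.tail_cons, Matrix.head_cons]
    rw [hD]
    exact hsqrt.mul hsin

theorem statement17 (m J g₀ α E γφ0 : ℝ)
    (hm : 0 < m) (hJ : 0 < J) (hg₀ : 0 < g₀) (hα : α ∈ Set.Ioo 0 (Real.pi / 2)) :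
    -- (i) the nonholonomic Hamilton–Jacobi equation on U
    (∀ q ∈ knifeU m J g₀ α E γφ0, knifeH m J g₀ α q (knifeGamma m J g₀ α E γφ0 q) = E)
      -- (ii) dγ vanishes on the constraint distribution
      ∧ (∀ q ∈ knifeU m J g₀ α E γφ0, ∀ u ∈ knifeD q, ∀ v ∈ knifeD q,
          fderiv ℝ (knifeGamma m J g₀ α E γφ0) q u ⬝ᵥ v
            - fderiv ℝ (knifeGamma m J g₀ α E γφ0) q v ⬝ᵥ u = 0) := by
  have hgamma : knifeGamma m J g₀ α E γφ0
      = gammaAux (m * (2 * E - γφ0 ^ 2 / J)) (2 * m ^ 2 * g₀ * Real.sin α) γφ0 := rfl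
  constructor
  · rintro q ⟨h0, h1, hr⟩
    have hsq : Real.sqrt (m * (2 * E - γφ0 ^ 2 / J) + 2 * m ^ 2 * g₀ * Real.sin α * q 1) ^ 2
        = m * (2 * E - γφ0 ^ 2 / J) + 2 * m ^ 2 * g₀ * Real.sin α * q 1 :=
      Real.sq_sqrt hr.le
    have hcs := Real.cos_sq_add_sin_sq (q 0)
    simp only [knifeH, knifeGamma, Matrix.cons_val_zero, Matrix.cons_val_one, Matrix.head_cons,
      Matrix.cons_val_two, Matrix.tail_cons]
    have key : Real.sqrt (m * (2 * E - γφ0 ^ 2 / J) + 2 * m ^ 2 * g₀ * Real.sin α * q 1) ^ 2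
          * Real.cos (q 0) ^ 2
        + Real.sqrt (m * (2 * E - γφ0 ^ 2 / J) + 2 * m ^ 2 * g₀ * Real.sin α * q 1) ^ 2
          * Real.sin (q 0) ^ 2
        = m * (2 * E - γφ0 ^ 2 / J) + 2 * m ^ 2 * g₀ * Real.sin α * q 1 := by
      rw [← mul_add, hcs, mul_one, hsq]
    rw [mul_pow, mul_pow, key]
    field_simp
    ring
  · rintro q ⟨h0, h1, hr⟩ u hu v hv
    have hder := gammaAux_hasFDerivAt (m * (2 * E - γφ0 ^ 2 / J))
      (2 * m ^ 2 * g₀ * Real.sin α) γφ0 q hr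
    rw [hgamma, hder.fderiv]
    set L := gammaAuxD (m * (2 * E - γφ0 ^ 2 / J)) (2 * m ^ 2 * g₀ * Real.sin α) q with hL
    rw [knifeD, Submodule.mem_span_pair] at hu hv
    obtain ⟨au, bu, rfl⟩ := hu
    obtain ⟨av, bv, rfl⟩ := hv
    have h12 : L ![1, 0, 0] ⬝ᵥ ![0, Real.cos (q 0), Real.sin (q 0)]
        = L ![0, Real.cos (q 0), Real.sin (q 0)] ⬝ᵥ ![1, 0, 0] := by
      simp [hL, gammaAuxD, dotProduct, Fin.sum_univ_three,
        ContinuousLinearMap.pi_apply, ContinuousLinearMap.add_apply,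
        ContinuousLinearMap.smul_apply, ContinuousLinearMap.proj_apply, smul_eq_mul]
      ring
    simp only [map_add, ContinuousLinearMap.map_smul, add_dotProduct, smul_dotProduct, dotProduct_add,
      dotProduct_smul, smul_eq_mul]
    rw [h12]
    ring
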